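/- arXiv:2506.19604 — 10 statements merged into one kernel-verified Lean document; each statement's English description precedes it below -/
import Mathlib

section
/- Let R be a commutative ring and I an ideal of R. Suppose f, g, h, a, b ∈ R satisfy f ≡ g·h (mod I) and a·g + b·h ≡ 1 (mod I). Define e := f − g·h, g' := g + e·b, and h' := h + e·a. Then f ≡ g'·h' (mod I²), g' ≡ g (mod I), and h' ≡ h (mod I). -/
/-- Hensel lifting, existence part: if `f ≡ g·h (mod I)` and `a·g + b·h ≡ 1 (mod I)`,
then with `e := f - g·h`, `g' := g + e·b`, `h' := h + e·a` we have
`f ≡ g'·h' (mod I²)`, `g' ≡ g (mod I)` and `h' ≡ h (mod I)`. -/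
theorem hensel_lifting_existence {R : Type*} [CommRing R] (I : Ideal R)
    (f g h a b : R)
    (hfgh : f - g * h ∈ I)
    (hab : a * g + b * h - 1 ∈ I) :
    f - (g + (f - g * h) * b) * (h + (f - g * h) * a) ∈ I ^ 2 ∧
      (g + (f - g * h) * b) - g ∈ I ∧
      (h + (f - g * h) * a) - h ∈ I := by
  refine ⟨?_, by simpa using I.mul_mem_right b hfgh, by simpa using I.mul_mem_right a hfgh⟩
  have key : f - (g + (f - g * h) * b) * (h + (f - g * h) * a)
      = -((f - g * h) * (a * g + b * h - 1)) - (f - g * h) * ((f - g * h) * (a * b)) := by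
    ring
  rw [key, sq]
  exact sub_mem (neg_mem (Ideal.mul_mem_mul hfgh hab)) (Ideal.mul_mem_mul hfgh (I.mul_mem_right _ hfgh))
end

section
/- Let R be a commutative ring and I an ideal of R. Suppose f, g, h, a, b ∈ R satisfy f ≡ g·h (mod I) and a·g + b·h ≡ 1 (mod I), and let g' := g + (f − g·h)·b, h' := h + (f − g·h)·a. Then there exist a' ≡ a (mod I) and b' ≡ b (mod I) such that a'·g' + b'·h' ≡ 1 (mod I²). -/
/-- Hensel lifting, pseudo-coprimality: the lifted factors `g'`, `h'` come with a
Bézout identity modulo `I²`. -/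
theorem hensel_lifting_pseudo_coprimality {R : Type*} [CommRing R] (I : Ideal R)
    (f g h a b : R)
    (hfgh : f - g * h ∈ I)
    (hab : a * g + b * h - 1 ∈ I) :
    ∃ a' b' : R, a' - a ∈ I ∧ b' - b ∈ I ∧
      a' * (g + (f - g * h) * b) + b' * (h + (f - g * h) * a) - 1 ∈ I ^ 2 := by
  set t := (a * g + b * h - 1) + 2 * a * b * (f - g * h) with ht_def
  have ht : t ∈ I := I.add_mem hab (I.mul_mem_left _ hfgh)
  refine ⟨a * (1 - t), b * (1 - t), ?_, ?_, ?_⟩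
  · have : a * (1 - t) - a = -(a * t) := by ring
    rw [this]; exact neg_mem (I.mul_mem_left _ ht)
  · have : b * (1 - t) - b = -(b * t) := by ring
    rw [this]; exact neg_mem (I.mul_mem_left _ ht)
  · have : a * (1 - t) * (g + (f - g * h) * b) + b * (1 - t) * (h + (f - g * h) * a) - 1
        = -(t * t) := by rw [ht_def]; ring
    rw [this, pow_two]
    exact neg_mem (Ideal.mul_mem_mul ht ht)
end

section
/- Let R be a commutative ring, I an ideal, and f, g, h, g', h', g̃, h̃ ∈ R with a·g + b·h ≡ 1 (mod I) for some a, b. Suppose f ≡ g'·h' (mod I²), f ≡ g̃·h̃ (mod I²), g' ≡ g̃ ≡ g (mod I), and h' ≡ h̃ ≡ h (mod I). Then there exists u ∈ I such that g̃ ≡ g'·(1 + u) (mod I²) and h̃ ≡ h'·(1 − u) (mod I²). -/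
/-- Hensel lifting, uniqueness part: two liftings of the same factorization modulo `I²`
differ by a multiplication by `1 + u` and `1 - u` for some `u ∈ I`. -/
theorem hensel_lifting_uniqueness {R : Type*} [CommRing R] (I : Ideal R)
    (f g h g' h' gt ht a b : R)
    (hab : a * g + b * h - 1 ∈ I)
    (hf' : f - g' * h' ∈ I ^ 2)
    (hft : f - gt * ht ∈ I ^ 2)
    (hg' : g' - g ∈ I) (hgt : gt - g ∈ I)
    (hh' : h' - h ∈ I) (hht : ht - h ∈ I) :
    ∃ u ∈ I, gt - g' * (1 + u) ∈ I ^ 2 ∧ ht - h' * (1 - u) ∈ I ^ 2 := by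
  have hδgI : gt - g' ∈ I := by
    have := I.sub_mem hgt hg'
    convert this using 1; ring
  have hδhI : ht - h' ∈ I := by
    have := I.sub_mem hht hh'
    convert this using 1; ring
  have he' : a * g' + b * h' - 1 ∈ I := by
    have := I.add_mem (I.add_mem hab (I.mul_mem_left a hg')) (I.mul_mem_left b hh')
    convert this using 1; ring
  have hmul : (gt - g') * (ht - h') ∈ I ^ 2 := by
    rw [pow_two]; exact Ideal.mul_mem_mul hδgI hδhI
  have hcross : h' * (gt - g') + g' * (ht - h') ∈ I ^ 2 := by
    have := (I ^ 2).sub_mem ((I ^ 2).sub_mem hf' hft) hmul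
    convert this using 1; ring
  refine ⟨a * (gt - g') - b * (ht - h'), I.sub_mem (I.mul_mem_left a hδgI)
    (I.mul_mem_left b hδhI), ?_, ?_⟩
  · have := (I ^ 2).add_mem
      (by rw [pow_two]; exact Ideal.mul_mem_mul (I.neg_mem he') hδgI)
      ((I ^ 2).mul_mem_left b hcross)
    convert this using 1; ring
  · have := (I ^ 2).add_mem
      (by rw [pow_two]; exact Ideal.mul_mem_mul (I.neg_mem he') hδhI)
      ((I ^ 2).mul_mem_left a hcross)
    convert this using 1; ring
end

section
/- Let F be a field, and let f ∈ F[[x₁,…,xₙ]][y] be a polynomial in y over the multivariate formal power series ring, and let μ ∈ F satisfy f(0, μ) = 0 and ∂_y f(0, μ) ≠ 0 (where evaluating at 0 means taking the constant term of each power series coefficient). Then there exists a unique power series φ ∈ F[[x₁,…,xₙ]] with constant term μ such that f(x, φ) = 0. -/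
/-!
Newton's iteration `y ↦ y - f(y) / f'(y)`, started at the constant series `μ`, squares the error
at every step: `f(μ) ^ 2 ^ n` divides `f` at the `n`-th iterate. As `f(μ)` has zero constant term,
the iterates converge coefficientwise, and their limit is a root with constant term `μ`.
Two such roots `φ, ψ` satisfy `0 = (ψ - φ) (f'(φ) + k (ψ - φ))`, and the second factor is a unit
because its constant term is that of `f'(φ)`.
-/

open Polynomial Filter Topology

namespace Polynomial

variable {S : Type*} [CommRing S] {P : S[X]} {x y : S}

theorem newtonMap_eq_add_neg (y : S) :
    P.newtonMap y = y + -(Ring.inverse (P.derivative.eval y) * P.eval y) := by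
  simp only [newtonMap_apply, coe_aeval_eq_eval, sub_eq_add_neg]

theorem eval_dvd_newtonMap_sub : P.eval y ∣ P.newtonMap y - y := by
  rw [newtonMap_eq_add_neg, add_sub_cancel_left, neg_mul_eq_neg_mul]
  exact dvd_mul_left _ _

theorem eval_sq_dvd_eval_newtonMap (h : IsUnit (P.derivative.eval y)) :
    P.eval y ^ 2 ∣ P.eval (P.newtonMap y) := by
  set u := Ring.inverse (P.derivative.eval y)
  obtain ⟨k, hk⟩ := binomExpansion P y (-(u * P.eval y))
  have hlinear : P.eval y + P.derivative.eval y * -(u * P.eval y) = 0 := by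
    rw [mul_neg, ← mul_assoc, Ring.mul_inverse_cancel _ h, one_mul, add_neg_cancel]
  exact ⟨k * u ^ 2, by rw [newtonMap_eq_add_neg, hk, hlinear]; ring⟩

theorem dvd_iterate_newtonMap_sub_and_pow_dvd_eval
    (h : ∀ y, P.eval x ∣ y - x → IsUnit (P.derivative.eval y)) (n : ℕ) :
    P.eval x ∣ P.newtonMap^[n] x - x ∧ P.eval x ^ 2 ^ n ∣ P.eval (P.newtonMap^[n] x) := by
  induction n with
  | zero => simp
  | succ n ih =>
    obtain ⟨hsub, hpow⟩ := ih
    rw [Function.iterate_succ_apply']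
    set y := P.newtonMap^[n] x
    have hy : P.eval x ∣ P.eval y := (dvd_pow_self _ (by positivity)).trans hpow
    refine ⟨?_, ?_⟩
    · rw [← sub_add_sub_cancel _ y]
      exact dvd_add (hy.trans eval_dvd_newtonMap_sub) hsub
    · rw [pow_succ, pow_mul]
      exact (pow_dvd_pow_of_dvd hpow 2).trans (eval_sq_dvd_eval_newtonMap (h y hsub))

end Polynomial

namespace MvPowerSeries

variable {σ R : Type*} [CommRing R]

theorem constantCoeff_eval (p : (MvPowerSeries σ R)[X]) (φ : MvPowerSeries σ R) :
    constantCoeff (p.eval φ) = (p.map constantCoeff).eval (constantCoeff φ) := by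
  rw [eval_map, eval₂_hom]

theorem order_le_of_dvd {φ ψ : MvPowerSeries σ R} (h : φ ∣ ψ) : φ.order ≤ ψ.order := by
  obtain ⟨χ, rfl⟩ := h
  exact le_self_add.trans le_order_mul

theorem tendsto_order_atTop_nhds_top_of_pow_dvd {e : MvPowerSeries σ R}
    {d : ℕ → MvPowerSeries σ R} (he : constantCoeff e = 0) (hd : ∀ n, e ^ n ∣ d n) :
    Tendsto (fun n ↦ (d n).order) atTop (𝓝 ⊤) := by
  rw [ENat.tendsto_nhds_top_iff_natCast_lt]
  intro m
  filter_upwards [eventually_gt_atTop m] with n hn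
  calc (m : ℕ∞) < n := by exact_mod_cast hn
    _ ≤ (e ^ n).order := le_order_pow_of_constantCoeff_eq_zero n he
    _ ≤ (d n).order := order_le_of_dvd (hd n)

namespace WithPiTopology

variable [TopologicalSpace R]

theorem tendsto_zero_of_tendsto_order_atTop_nhds_top {c : ℕ → MvPowerSeries σ R}
    (h : Tendsto (fun n ↦ (c n).order) atTop (𝓝 ⊤)) : Tendsto c atTop (𝓝 0) := by
  rw [tendsto_iff_coeff_tendsto]
  intro d
  rw [ENat.tendsto_nhds_top_iff_natCast_lt] at h
  refine tendsto_const_nhds.congr' ?_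
  filter_upwards [h d.degree] with n hn
  rw [map_zero, coeff_of_lt_order hn]

theorem exists_tendsto_of_tendsto_order_sub_atTop_nhds_top [IsTopologicalSemiring R]
    {c : ℕ → MvPowerSeries σ R} (h : Tendsto (fun n ↦ (c (n + 1) - c n).order) atTop (𝓝 ⊤)) :
    ∃ φ, Tendsto c atTop (𝓝 φ) := by
  obtain ⟨s, hs⟩ := summable_of_tendsto_order_atTop_nhds_top h
  refine ⟨c 0 + s, (hs.tendsto_sum_nat.const_add (c 0)).congr fun n ↦ ?_⟩
  rw [Finset.sum_range_sub, add_sub_cancel]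

end WithPiTopology

open WithPiTopology in
theorem exists_eval_eq_zero_of_constantCoeff_eval_eq_zero (P : (MvPowerSeries σ R)[X])
    (x : MvPowerSeries σ R) (h0 : constantCoeff (P.eval x) = 0)
    (h1 : IsUnit (constantCoeff (P.derivative.eval x))) :
    ∃ φ, constantCoeff φ = constantCoeff x ∧ P.eval φ = 0 := by
  let _ : TopologicalSpace R := ⊥
  have : DiscreteTopology R := ⟨rfl⟩
  have hcc : ∀ y, P.eval x ∣ y - x → constantCoeff y = constantCoeff x := by
    rintro y ⟨k, hk⟩
    rw [← sub_eq_zero, ← map_sub, hk, map_mul, h0, zero_mul]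
  have hunit : ∀ y, P.eval x ∣ y - x → IsUnit (P.derivative.eval y) := fun y hy ↦ by
    rwa [isUnit_iff_constantCoeff, constantCoeff_eval, hcc y hy, ← constantCoeff_eval]
  have hiter := dvd_iterate_newtonMap_sub_and_pow_dvd_eval hunit
  have hpow_dvd : ∀ n, P.eval x ^ n ∣ P.eval (P.newtonMap^[n] x) := fun n ↦
    (pow_dvd_pow _ n.lt_two_pow_self.le).trans (hiter n).2
  obtain ⟨φ, hφ⟩ := exists_tendsto_of_tendsto_order_sub_atTop_nhds_top
    (c := fun n ↦ P.newtonMap^[n] x) (tendsto_order_atTop_nhds_top_of_pow_dvd h0 fun n ↦ by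
      simpa only [Function.iterate_succ_apply'] using (hpow_dvd n).trans eval_dvd_newtonMap_sub)
  refine ⟨φ, ?_, ?_⟩
  · refine tendsto_nhds_unique (((continuous_constantCoeff R).tendsto φ).comp hφ) ?_
    exact tendsto_const_nhds.congr fun n ↦ (hcc _ (hiter n).1).symm
  · exact tendsto_nhds_unique ((P.continuous.tendsto φ).comp hφ)
      (tendsto_zero_of_tendsto_order_atTop_nhds_top
        (tendsto_order_atTop_nhds_top_of_pow_dvd h0 hpow_dvd))

theorem eq_of_eval_eq_zero_of_constantCoeff_eq {P : (MvPowerSeries σ R)[X]}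
    {φ ψ : MvPowerSeries σ R} (hφ : P.eval φ = 0) (hψ : P.eval ψ = 0)
    (hcc : constantCoeff φ = constantCoeff ψ)
    (hunit : IsUnit (constantCoeff (P.derivative.eval φ))) : φ = ψ := by
  obtain ⟨k, hk⟩ := binomExpansion P φ (ψ - φ)
  rw [add_sub_cancel, hψ, hφ, zero_add, sq, ← mul_assoc, ← add_mul] at hk
  have hfactor : IsUnit (P.derivative.eval φ + k * (ψ - φ)) := by
    rwa [isUnit_iff_constantCoeff, map_add, map_mul, map_sub, hcc, sub_self, mul_zero, add_zero]
  exact (sub_eq_zero.mp (hfactor.mul_right_eq_zero.mp hk.symm)).symm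

theorem existsUnique_eval_eq_zero (P : (MvPowerSeries σ R)[X]) (a : R)
    (h0 : (P.map constantCoeff).eval a = 0)
    (h1 : IsUnit ((P.derivative.map constantCoeff).eval a)) :
    ∃! φ : MvPowerSeries σ R, constantCoeff φ = a ∧ P.eval φ = 0 := by
  have hcc {p : (MvPowerSeries σ R)[X]} {φ : MvPowerSeries σ R} (hφ : constantCoeff φ = a) :
      constantCoeff (p.eval φ) = (p.map constantCoeff).eval a := hφ ▸ constantCoeff_eval p φ
  obtain ⟨φ, hφa, hφ⟩ := exists_eval_eq_zero_of_constantCoeff_eval_eq_zero P (C a)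
    (by rwa [hcc (constantCoeff_C a)]) (by rwa [hcc (constantCoeff_C a)])
  rw [constantCoeff_C] at hφa
  refine ⟨φ, ⟨hφa, hφ⟩, fun ψ ⟨hψa, hψ⟩ ↦ ?_⟩
  exact (eq_of_eval_eq_zero_of_constantCoeff_eq hφ hψ (hφa.trans hψa.symm) (by rwa [hcc hφa])).symm

end MvPowerSeries

/-- Formal implicit function theorem: if `f ∈ F[[x₁,…,xₙ]][y]` satisfies
`f(0, μ) = 0` and `∂_y f(0, μ) ≠ 0`, then there is a unique power series `φ`
with constant term `μ` such that `f(x, φ) = 0`. -/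
theorem unique_power_series_root {F : Type*} [Field F] {n : ℕ}
    (f : Polynomial (MvPowerSeries (Fin n) F)) (μ : F)
    (h0 : (f.map (MvPowerSeries.constantCoeff)).eval μ = 0)
    (h1 : ((derivative f).map (MvPowerSeries.constantCoeff)).eval μ ≠ 0) :
    ∃! φ : MvPowerSeries (Fin n) F,
      MvPowerSeries.constantCoeff φ = μ ∧ f.eval φ = 0 :=
  MvPowerSeries.existsUnique_eval_eq_zero f μ h0 (isUnit_iff_ne_zero.mpr h1)
end

section
/- Let F be a field, f ∈ F[[x]][y] with μ ∈ F such that f(0, μ) = 0 and ∂_y f(0, μ) ≠ 0, and let φ ∈ F[[x]] be the unique power series root with constant term μ. Define φ₀ := μ and φ_{t+1} := φ_t − f(x, φ_t)/∂_y f(x, φ_t). Then each ∂_y f(x, φ_t) is a unit in F[[x]], and for all t ≥ 0, φ ≡ φ_t modulo ⟨x⟩^{2^t}. -/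
/-!
Write `e = φ - ψ` for the error of an approximation `ψ` of the root `φ`. Taylor expansion
gives `0 = f(φ) = f(ψ) + f'(ψ) e + k e²`, so after one Newton step the error is
`-k f'(ψ)⁻¹ e²`: an error in `I ^ m` becomes an error in `I ^ (2 m)`. Over `F[[x]]`, every
approximation agreeing with `φ` modulo `⟨x⟩` has `f'(ψ)` with constant term `f'(0, μ) ≠ 0`,
hence invertible.
-/

open Polynomial

theorem Polynomial.sub_newton_step_mem_pow_two_mul {R : Type*} [CommRing R] {I : Ideal R}
    {m : ℕ} (f : R[X]) {φ ψ u : R} (hroot : f.eval φ = 0)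
    (hu : (derivative f).eval ψ * u = 1) (hψ : φ - ψ ∈ I ^ m) :
    φ - (ψ - f.eval ψ * u) ∈ I ^ (2 * m) := by
  obtain ⟨k, hk⟩ := f.binomExpansion ψ (φ - ψ)
  rw [add_sub_cancel, hroot] at hk
  have hstep : φ - (ψ - f.eval ψ * u) = -(k * u) * (φ - ψ) ^ 2 := by
    linear_combination -u * hk - (φ - ψ) * hu
  rw [hstep, mul_comm 2, pow_mul]
  exact Ideal.mul_mem_left _ _ (Ideal.pow_mem_pow hψ 2)

theorem RingHom.eval_map_eq_of_sub_mem_ker {R S : Type*} [CommRing R] [CommRing S]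
    (g : R →+* S) (p : R[X]) {φ ψ : R} (h : φ - ψ ∈ RingHom.ker g) :
    g (p.eval ψ) = (p.map g).eval (g φ) := by
  rw [(RingHom.sub_mem_ker_iff g).mp h, eval_map_apply]

theorem newton_iteration_quadratic_general {F : Type*} [Field F] {n : ℕ}
    (f : Polynomial (MvPowerSeries (Fin n) F)) (μ : F)
    (h1 : ((derivative f).map ((MvPowerSeries.constantCoeff : MvPowerSeries (Fin n) F →+* F))).eval μ ≠ 0)
    (φ : MvPowerSeries (Fin n) F)
    (hφ0 : (MvPowerSeries.constantCoeff : MvPowerSeries (Fin n) F →+* F) φ = μ)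
    (hφroot : f.eval φ = 0)
    (φseq : ℕ → MvPowerSeries (Fin n) F)
    (hseq0 : φseq 0 = (MvPowerSeries.C : F →+* MvPowerSeries (Fin n) F) μ)
    (hseq : ∀ t, φseq (t + 1) =
      φseq t - f.eval (φseq t) * ((derivative f).eval (φseq t))⁻¹) :
    ∀ t, IsUnit ((derivative f).eval (φseq t)) ∧
      φ - φseq t ∈
        (RingHom.ker ((MvPowerSeries.constantCoeff : MvPowerSeries (Fin n) F →+* F))) ^ (2 ^ t) := by
  set cc := (MvPowerSeries.constantCoeff : MvPowerSeries (Fin n) F →+* F)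
  have hderiv : ∀ t, φ - φseq t ∈ RingHom.ker cc → cc ((derivative f).eval (φseq t)) ≠ 0 :=
    fun t h ↦ by rwa [cc.eval_map_eq_of_sub_mem_ker _ h, hφ0]
  have hmem : ∀ t, φ - φseq t ∈ RingHom.ker cc ^ 2 ^ t := by
    intro t
    induction t with
    | zero => simp [RingHom.mem_ker, hseq0, hφ0, cc]
    | succ t ih =>
      have hinv := MvPowerSeries.mul_inv_cancel _
        (hderiv t (Ideal.pow_le_self (pow_ne_zero t two_ne_zero) ih))
      rw [hseq t, pow_succ']
      exact f.sub_newton_step_mem_pow_two_mul hφroot hinv ih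
  refine fun t ↦ ⟨?_, hmem t⟩
  rw [MvPowerSeries.isUnit_iff_constantCoeff, isUnit_iff_ne_zero]
  exact hderiv t (Ideal.pow_le_self (pow_ne_zero t two_ne_zero) (hmem t))

/-- Newton iteration with quadratic convergence: with `∂_y f(0,μ) ≠ 0` and the
iteration `φ₀ = μ`, `φ_{t+1} = φ_t − f(x, φ_t)/∂_y f(x, φ_t)`, each denominator
`∂_y f(x, φ_t)` is a unit of `F[[x]]` and the iterates agree with the unique power
series root `φ` modulo `⟨x⟩^{2^t}`. -/
theorem newton_iteration_quadratic {F : Type*} [Field F] {n : ℕ}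
    (f : Polynomial (MvPowerSeries (Fin n) F)) (μ : F)
    (h0 : (f.map ((MvPowerSeries.constantCoeff : MvPowerSeries (Fin n) F →+* F))).eval μ = 0)
    (h1 : ((derivative f).map ((MvPowerSeries.constantCoeff : MvPowerSeries (Fin n) F →+* F))).eval μ ≠ 0)
    (φ : MvPowerSeries (Fin n) F)
    (hφ0 : (MvPowerSeries.constantCoeff : MvPowerSeries (Fin n) F →+* F) φ = μ)
    (hφroot : f.eval φ = 0)
    (φseq : ℕ → MvPowerSeries (Fin n) F)
    (hseq0 : φseq 0 = (MvPowerSeries.C : F →+* MvPowerSeries (Fin n) F) μ)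
    (hseq : ∀ t, φseq (t + 1) =
      φseq t - f.eval (φseq t) * ((derivative f).eval (φseq t))⁻¹) :
    ∀ t, IsUnit ((derivative f).eval (φseq t)) ∧
      φ - φseq t ∈
        (RingHom.ker ((MvPowerSeries.constantCoeff : MvPowerSeries (Fin n) F →+* F))) ^ (2 ^ t) :=
  newton_iteration_quadratic_general f μ h1 φ hφ0 hφroot φseq hseq0 hseq
end

section
/- Let g, h be nonzero polynomials in n variables over a field. Then the Newton polytope of the product satisfies P_{g·h} = P_g + P_h, where + denotes the Minkowski sum of polytopes. -/
/-!
Every exponent of `g h` is a sum of exponents of `g` and `h`, and the convex hull of a Minkowski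
sum is the sum of the convex hulls; this gives `P_{gh} ⊆ P_g + P_h`. Conversely, `P_g + P_h` is
the convex hull of the finitely many sums `a + b` of exponents, hence of its vertices. A vertex
`v = a + b` has no other such decomposition: if also `v = a' + b'`, then `v` is the midpoint of
`a' + b` and `a + b'`, which forces `a' = a`. So the coefficient of `x^v` in `g h` is the single
product `g_a h_b ≠ 0`, and `v` is an exponent of `g h`.
-/

open scoped Pointwise

/-- The Newton polytope of a multivariate polynomial: the convex hull (in `ℝⁿ`)
of its exponent vectors. -/
noncomputable def newtonPolytope {n : ℕ} {F : Type*} [Field F]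
    (f : MvPolynomial (Fin n) F) : Set (Fin n → ℝ) :=
  convexHull ℝ ((fun m : Fin n →₀ ℕ => fun i => (m i : ℝ)) '' f.support)

open Set

section Minkowski

variable {𝕜 E : Type*} [Field 𝕜] [LinearOrder 𝕜] [IsStrictOrderedRing 𝕜] [AddCommGroup E]
  [Module 𝕜 E] {A B : Set E} {a b a' b' : E}

theorem eq_and_eq_of_add_mem_extremePoints_add (hv : a + b ∈ (A + B).extremePoints 𝕜)
    (ha : a ∈ A) (hb : b ∈ B) (ha' : a' ∈ A) (hb' : b' ∈ B) (h : a' + b' = a + b) :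
    a' = a ∧ b' = b := by
  have hmid : a + b ∈ openSegment 𝕜 (a' + b) (a + b') := by
    refine ⟨1 / 2, 1 / 2, by norm_num, by norm_num, by norm_num, ?_⟩
    rw [← smul_add, show a' + b + (a + b') = (a' + b') + (a + b) by abel, h, ← two_smul 𝕜,
      smul_smul]
    norm_num
  have ha'a : a' = a := add_right_cancel (hv.2 (add_mem_add ha' hb) (add_mem_add ha hb') hmid)
  subst ha'a
  exact ⟨rfl, add_left_cancel h⟩

end Minkowski

theorem Set.Finite.convexHull_extremePoints_convexHull {E : Type*} [AddCommGroup E] [Module ℝ E]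
    [TopologicalSpace E] [T2Space E] [IsTopologicalAddGroup E] [ContinuousSMul ℝ E]
    [LocallyConvexSpace ℝ E] {s : Set E} (hs : s.Finite) :
    convexHull ℝ ((convexHull ℝ s).extremePoints ℝ) = convexHull ℝ s := by
  have hext : ((convexHull ℝ s).extremePoints ℝ).Finite :=
    hs.subset extremePoints_convexHull_subset
  rw [← (hext.isCompact_convexHull ℝ).isClosed.closure_eq]
  exact closure_convexHull_extremePoints (hs.isCompact_convexHull ℝ) (convex_convexHull ℝ s)

namespace MvPolynomial

variable {σ R : Type*}

noncomputable def exponentToReal (σ : Type*) : (σ →₀ ℕ) →+ (σ → ℝ) where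
  toFun m i := m i
  map_zero' := by ext; simp
  map_add' a b := by ext; simp

@[simp]
theorem exponentToReal_apply (m : σ →₀ ℕ) (i : σ) : exponentToReal σ m i = m i := rfl

theorem exponentToReal_injective : Function.Injective (exponentToReal σ) := fun a b hab ↦
  Finsupp.ext fun i ↦ by simpa using congrFun hab i

variable [CommSemiring R] [NoZeroDivisors R]

theorem mem_image_support_mul_of_mem_extremePoints {f g : MvPolynomial σ R} {v : σ → ℝ}
    (hv : v ∈ (convexHull ℝ (exponentToReal σ '' f.support +
      exponentToReal σ '' g.support)).extremePoints ℝ) :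
    v ∈ exponentToReal σ '' (f * g).support := by
  set e := exponentToReal σ
  have hv' : v ∈ (e '' f.support + e '' g.support).extremePoints ℝ :=
    inter_extremePoints_subset_extremePoints_of_subset (subset_convexHull ℝ _)
      ⟨extremePoints_convexHull_subset hv, hv⟩
  obtain ⟨_, ⟨a, ha, rfl⟩, _, ⟨b, hb, rfl⟩, rfl⟩ := extremePoints_subset hv'
  have hunique : UniqueAdd f.support g.support a b := fun a' b' ha' hb' hab ↦ by
    have := eq_and_eq_of_add_mem_extremePoints_add hv' (mem_image_of_mem e ha)
      (mem_image_of_mem e hb) (mem_image_of_mem e ha') (mem_image_of_mem e hb')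
      (by rw [← map_add, ← map_add, hab])
    exact ⟨exponentToReal_injective this.1, exponentToReal_injective this.2⟩
  refine ⟨a + b, ?_, map_add e a b⟩
  rw [Finset.mem_coe, mem_support_iff, coeff, AddMonoidAlgebra.coeff_mul_add_of_uniqueAdd hunique]
  exact mul_ne_zero (mem_support_iff.1 ha) (mem_support_iff.1 hb)

theorem convexHull_image_support_mul (f g : MvPolynomial σ R) :
    convexHull ℝ (exponentToReal σ '' (f * g).support) =
      convexHull ℝ (exponentToReal σ '' f.support) +
        convexHull ℝ (exponentToReal σ '' g.support) := by
  classical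
  set e := exponentToReal σ
  have hsum : e '' ↑(f.support + g.support) = e '' f.support + e '' g.support := by
    rw [Finset.coe_add, image_add]
  rw [← convexHull_add, ← hsum]
  refine (convexHull_mono (image_mono (support_mul f g))).antisymm ?_
  rw [← ((f.support + g.support).finite_toSet.image e).convexHull_extremePoints_convexHull, hsum]
  exact convexHull_mono fun v hv ↦ mem_image_support_mul_of_mem_extremePoints hv

end MvPolynomial

theorem newtonPolytope_mul_general {n : ℕ} {F : Type*} [Field F]
    (g h : MvPolynomial (Fin n) F) :
    newtonPolytope (g * h) = newtonPolytope g + newtonPolytope h :=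
  MvPolynomial.convexHull_image_support_mul g h

/-- Ostrowski's theorem: the Newton polytope of a product is the Minkowski sum
of the Newton polytopes of the factors. -/
theorem newtonPolytope_mul {n : ℕ} {F : Type*} [Field F]
    (g h : MvPolynomial (Fin n) F) (hg : g ≠ 0) (hh : h ≠ 0) :
    newtonPolytope (g * h) = newtonPolytope g + newtonPolytope h :=
  newtonPolytope_mul_general g h
end

section
/- Let f = g·h be a factorization of nonzero multilinear polynomials over a field (each variable appears with individual degree at most 1 in f). Then g is multilinear and the number of monomials of g is at most the number of monomials of f. -/
/-!
Over a domain individual degrees add under multiplication, so the factors of a multilinear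
polynomial are multilinear and involve disjoint sets of variables. Then a monomial `a + b`
with `a ∈ supp g`, `b ∈ supp h` arises in `g * h` only from the pair `(a, b)`, so its
coefficient is `g_a h_b ≠ 0`; translating `supp g` by a fixed `b ∈ supp h` thus injects it
into `supp (g * h)`.
-/

namespace MvPolynomial

variable {R σ : Type*} [CommSemiring R] {p q : MvPolynomial σ R}

theorem coeff_mul_add_of_disjoint_vars (hpq : Disjoint p.vars q.vars) {a b : σ →₀ ℕ}
    (ha : a ∈ p.support) (hb : b ∈ q.support) :
    (p * q).coeff (a + b) = p.coeff a * q.coeff b := by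
  classical
  rw [coeff_mul,
    Finset.sum_eq_single_of_mem (a, b) (Finset.HasAntidiagonal.mem_antidiagonal.2 rfl)]
  rintro ⟨a', b'⟩ hsum hne
  by_contra hcoeff
  have ha' : a' ∈ p.support := mem_support_iff.2 (left_ne_zero_of_mul hcoeff)
  have hb' : b' ∈ q.support := mem_support_iff.2 (right_ne_zero_of_mul hcoeff)
  have hsum_i (i : σ) : a' i + b' i = a i + b i := by
    simpa using DFunLike.congr_fun (Finset.HasAntidiagonal.mem_antidiagonal.1 hsum) i
  -- each variable occurs on at most one side, where the two decompositions must agree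
  have hcoord (i : σ) : a' i = a i ∧ b' i = b i := by
    by_cases hi : i ∈ p.vars
    · have hi' : i ∉ q.vars := Finset.disjoint_left.1 hpq hi
      have := hsum_i i
      have := mem_support_notMem_vars_zero hb hi'
      have := mem_support_notMem_vars_zero hb' hi'
      omega
    · have := hsum_i i
      have := mem_support_notMem_vars_zero ha hi
      have := mem_support_notMem_vars_zero ha' hi
      omega
  exact hne (Prod.ext (Finsupp.ext fun i => (hcoord i).1) (Finsupp.ext fun i => (hcoord i).2))

variable [NoZeroDivisors R]

theorem card_support_le_card_support_mul_of_disjoint_vars (hq : q ≠ 0)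
    (hpq : Disjoint p.vars q.vars) : p.support.card ≤ (p * q).support.card := by
  obtain ⟨b, hb⟩ := support_nonempty.2 hq
  refine Finset.card_le_card_of_injOn (· + b) (fun a ha => ?_) (add_left_injective b).injOn
  rw [Finset.mem_coe, mem_support_iff, coeff_mul_add_of_disjoint_vars hpq ha hb]
  exact mul_ne_zero (mem_support_iff.1 ha) (mem_support_iff.1 hb)

theorem disjoint_vars_of_degreeOf_mul_le_one (hp : p ≠ 0) (hq : q ≠ 0)
    (h : ∀ i, (p * q).degreeOf i ≤ 1) : Disjoint p.vars q.vars := by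
  refine Finset.disjoint_left.2 fun i hip hiq => ?_
  have := h i
  rw [degreeOf_mul_eq hp hq] at this
  rw [mem_vars_iff_degreeOf_ne_zero] at hip hiq
  omega

end MvPolynomial

open MvPolynomial in
/-- Factors of multilinear polynomials are multilinear and at least as sparse:
if `f = g·h` is multilinear (every variable of individual degree ≤ 1) with
`g, h ≠ 0`, then `g` is multilinear and `‖g‖ ≤ ‖f‖`. -/
theorem multilinear_factor_sparsity {n : ℕ} {F : Type*} [Field F]
    (f g h : MvPolynomial (Fin n) F) (hg : g ≠ 0) (hh : h ≠ 0)
    (hfgh : f = g * h)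
    (hml : ∀ m ∈ f.support, ∀ i : Fin n, m i ≤ 1) :
    (∀ m ∈ g.support, ∀ i : Fin n, m i ≤ 1) ∧
      g.support.card ≤ f.support.card := by
  subst hfgh
  have hdeg (i : Fin n) : (g * h).degreeOf i ≤ 1 := degreeOf_le_iff.2 fun m hm => hml m hm i
  refine ⟨fun m hm i => ?_, card_support_le_card_support_mul_of_disjoint_vars hh
    (disjoint_vars_of_degreeOf_mul_le_one hg hh hdeg)⟩
  calc m i ≤ g.degreeOf i := monomial_le_degreeOf i hm
    _ ≤ g.degreeOf i + h.degreeOf i := Nat.le_add_right _ _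
    _ = (g * h).degreeOf i := (degreeOf_mul_eq hg hh).symm
    _ ≤ 1 := hdeg i
end

section
/- Over any field, the polynomial f = ∏_{i=1}^n (x_i^d − 1) has exactly 2^n monomials, and its factor g = ∏_{i=1}^n (1 + x_i + ⋯ + x_i^{d−1}) has exactly d^n monomials. In particular, g divides f and ‖g‖ = ‖f‖^{log₂ d}. -/
/-!
Substituting `X i` into univariate polynomials `pᵢ` and multiplying over `i` expands into a sum of
monomials indexed by `∏ᵢ supp pᵢ`, with pairwise distinct exponents and coefficients that are
products of nonzero elements of a domain; hence sparsity is multiplicative over disjoint variables.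
With `‖xᵈ − 1‖ = 2` and `‖1 + x + ⋯ + x^{d−1}‖ = d` this gives `2ⁿ` and `dⁿ`, and `g ∣ f` holds factor
by factor since `(1 + x + ⋯ + x^{d−1}) (x − 1) = xᵈ − 1`.
-/

open MvPolynomial

namespace Polynomial

theorem card_support_X_pow_sub_one {R : Type*} [Ring R] [Nontrivial R] {d : ℕ} (hd : d ≠ 0) :
    (X ^ d - 1 : R[X]).support.card = 2 := by
  simpa [sub_eq_add_neg] using
    card_support_binomial (R := R) hd one_ne_zero (neg_ne_zero.2 one_ne_zero)

theorem support_geom_sum_X {R : Type*} [Semiring R] [Nontrivial R] (d : ℕ) :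
    (∑ j ∈ Finset.range d, X ^ j : R[X]).support = Finset.range d := by
  ext k
  simp [coeff_X_pow]

end Polynomial

namespace MvPolynomial

variable {R σ : Type*} [CommSemiring R]

theorem card_support_sum_monomial {ι : Type*} (s : Finset ι) {e : ι → σ →₀ ℕ} {c : ι → R}
    (he : Function.Injective e) (hc : ∀ i ∈ s, c i ≠ 0) :
    (∑ i ∈ s, monomial (e i) (c i)).support.card = s.card := by
  classical
  have hdisj : ∀ i j, i ≠ j →
      Disjoint (monomial (e i) (c i)).support (monomial (e j) (c j)).support := fun i j hij =>
    (Finset.disjoint_singleton.2 (he.ne hij)).mono support_monomial_subset support_monomial_subset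
  have hsupp : (∑ i ∈ s, monomial (e i) (c i)).support
      = s.biUnion fun i => (monomial (e i) (c i)).support := by
    have := Finsupp.support_sum_eq_biUnion s hdisj
    rwa [← AddMonoidAlgebra.coeff_sum] at this
  rw [hsupp, Finset.card_biUnion fun i _ j _ hij => hdisj i j hij, Finset.card_eq_sum_ones]
  refine Finset.sum_congr rfl fun i hi => ?_
  rw [support_monomial, if_neg (hc i hi), Finset.card_singleton]

theorem aeval_X_eq_sum_monomial (i : σ) (p : Polynomial R) :
    Polynomial.aeval (X i : MvPolynomial σ R) p
      = ∑ k ∈ p.support, monomial (Finsupp.single i k) (p.coeff k) := by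
  conv_lhs => rw [p.as_sum_support_C_mul_X_pow]
  simp [C_mul_X_pow_eq_monomial]

variable [Fintype σ] [DecidableEq σ]

theorem prod_aeval_X_eq_sum_monomial (p : σ → Polynomial R) :
    ∏ i, Polynomial.aeval (X i : MvPolynomial σ R) (p i)
      = ∑ f ∈ Fintype.piFinset fun i => (p i).support,
          monomial (Finsupp.equivFunOnFinite.symm f) (∏ i, (p i).coeff (f i)) := by
  simp_rw [aeval_X_eq_sum_monomial, Finset.prod_univ_sum, Finsupp.equivFunOnFinite_symm_eq_sum,
    monomial_sum_prod]

theorem card_support_prod_aeval_X [NoZeroDivisors R] [Nontrivial R] (p : σ → Polynomial R) :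
    (∏ i, Polynomial.aeval (X i : MvPolynomial σ R) (p i)).support.card
      = ∏ i, (p i).support.card := by
  rw [prod_aeval_X_eq_sum_monomial,
    card_support_sum_monomial _ Finsupp.equivFunOnFinite.symm.injective, Fintype.card_piFinset]
  intro f hf
  exact Finset.prod_ne_zero_iff.2 fun i _ =>
    Polynomial.mem_support_iff.1 (Fintype.mem_piFinset.1 hf i)

end MvPolynomial

/-- Over any field, `f = ∏ᵢ (xᵢ^d − 1)` has `2^n` monomials while its factor
`g = ∏ᵢ (1 + xᵢ + ⋯ + xᵢ^{d−1})` has `d^n` monomials; in particular `g ∣ f` and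
`‖g‖ = ‖f‖^{log₂ d}`. -/
theorem sparse_with_dense_factor {F : Type*} [Field F] (n d : ℕ) (hd : 1 ≤ d) :
    (∏ i : Fin n, ((X i) ^ d - 1) : MvPolynomial (Fin n) F).support.card = 2 ^ n ∧
    (∏ i : Fin n, ∑ j ∈ Finset.range d, (X i) ^ j
        : MvPolynomial (Fin n) F).support.card = d ^ n ∧
    (∏ i : Fin n, ∑ j ∈ Finset.range d, (X i) ^ j : MvPolynomial (Fin n) F)
      ∣ ∏ i : Fin n, ((X i) ^ d - 1) ∧
    ((d : ℝ) ^ n : ℝ) = ((2 : ℝ) ^ n : ℝ) ^ (Real.logb 2 (d : ℝ)) := by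
  have hf : (∏ i : Fin n, ((X i) ^ d - 1) : MvPolynomial (Fin n) F)
      = ∏ i, Polynomial.aeval (X i) (Polynomial.X ^ d - 1 : Polynomial F) := by
    simp
  have hg : (∏ i : Fin n, ∑ j ∈ Finset.range d, (X i) ^ j : MvPolynomial (Fin n) F)
      = ∏ i, Polynomial.aeval (X i) (∑ j ∈ Finset.range d, Polynomial.X ^ j : Polynomial F) := by
    simp
  refine ⟨?_, ?_, ?_, ?_⟩
  · rw [hf, card_support_prod_aeval_X, Polynomial.card_support_X_pow_sub_one (by omega),
      Finset.prod_const, Finset.card_fin]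
  · rw [hg, card_support_prod_aeval_X, Polynomial.support_geom_sum_X, Finset.card_range,
      Finset.prod_const, Finset.card_fin]
  · exact Finset.prod_dvd_prod_of_dvd _ _ fun i _ => Dvd.intro _ (geom_sum_mul (X i) d)
  · rw [← Real.rpow_pow_comm zero_le_two,
      Real.rpow_logb zero_lt_two (by norm_num) (by exact_mod_cast hd)]
end

section
/- Let f = Σ_{i=0}^{d} f_i(x) y^i ∈ F[x][y] be monic of degree d in y. Suppose f = g·h with g = Σ_{i=0}^{d₁} g_i y^i and h = Σ_{i=0}^{d₂} h_i y^i both monic in y, d₁ + d₂ = d. Then the Jacobian matrix of the d polynomial maps φ_k(u, w) := f_k − Σ_{i+j=k} u_i w_j (0 ≤ k ≤ d−1, variables u₀,…,u_{d₁−1}, w₀,…,w_{d₂−1}, with u_{d₁} = w_{d₂} = 1 fixed) evaluated at (g₀,…,g_{d₁−1}, h₀,…,h_{d₂−1}) is invertible over the fraction field of F[x] if and only if g and h are coprime in y over that fraction field. -/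
open Polynomial

/-- The Jacobian of the coefficient equations `φ_k(u,w) = f_k − Σ_{i+j=k} u_i w_j`
(with `u_{d₁} = w_{d₂} = 1` fixed) evaluated at the coefficients of `g` and `h`:
the `(k, i)` entry for `i < d₁` is `−h_{k−i}` and the `(k, d₁+j)` entry is `−g_{k−j}`. -/
noncomputable def henselJacobian {R : Type*} [CommRing R] (d₁ d₂ : ℕ)
    (g h : Polynomial R) : Matrix (Fin (d₁ + d₂)) (Fin (d₁ + d₂)) R :=
  Matrix.of fun k j =>
    if (j : ℕ) < d₁ then
      (if (j : ℕ) ≤ (k : ℕ) then -h.coeff ((k : ℕ) - (j : ℕ)) else 0)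
    else
      (if (j : ℕ) - d₁ ≤ (k : ℕ) then -g.coeff ((k : ℕ) - ((j : ℕ) - d₁)) else 0)

/-! The Jacobian is, entry by entry, minus the Sylvester matrix of `g` and `h`, so its
determinant is `± Res(g, h)`; for monic `g` this resultant is a unit exactly when `g` and `h`
are coprime (`Polynomial.isUnit_resultant_iff_isCoprime`). -/

section HenselJacobian

variable {R : Type*} [CommRing R] {d₁ d₂ : ℕ} {g h : R[X]}

theorem henselJacobian_eq_neg_sylvester (hg : g.natDegree ≤ d₁) (hh : h.natDegree ≤ d₂) :
    henselJacobian d₁ d₂ g h = -sylvester g h d₁ d₂ := by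
  ext k j
  induction j using Fin.addCases with
  | left j =>
    simp only [henselJacobian, sylvester, Matrix.of_apply, Matrix.neg_apply,
      Fin.addCases_left, Fin.val_castAdd, j.2, if_true, Set.mem_Icc, ite_and]
    split_ifs <;> simp only [neg_zero, neg_eq_zero]
    exact coeff_eq_zero_of_natDegree_lt (by omega)
  | right j =>
    simp only [henselJacobian, sylvester, Matrix.of_apply, Matrix.neg_apply,
      Fin.addCases_right, Fin.val_natAdd, Set.mem_Icc, ite_and, Nat.add_sub_cancel_left,
      Nat.not_lt.mpr (Nat.le_add_right d₁ j), if_false]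
    split_ifs <;> simp only [neg_zero, neg_eq_zero]
    exact coeff_eq_zero_of_natDegree_lt (by omega)

theorem det_henselJacobian (hg : g.natDegree ≤ d₁) (hh : h.natDegree ≤ d₂) :
    (henselJacobian d₁ d₂ g h).det = (-1) ^ (d₁ + d₂) * resultant g h d₁ d₂ := by
  rw [henselJacobian_eq_neg_sylvester hg hh, Matrix.det_neg, Fintype.card_fin, resultant]

theorem isUnit_det_henselJacobian_iff (hg : g.Monic) (hd₁ : g.natDegree = d₁)
    (hd₂ : h.natDegree = d₂) :
    IsUnit (henselJacobian d₁ d₂ g h).det ↔ IsCoprime g h := by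
  rw [det_henselJacobian hd₁.le hd₂.le, ((isUnit_neg_one (α := R)).pow _).mul_left_iff,
    ← hd₁, ← hd₂, isUnit_resultant_iff_isCoprime hg]

theorem henselJacobian_map {S : Type*} [CommRing S] (φ : R →+* S) :
    (henselJacobian d₁ d₂ g h).map φ = henselJacobian d₁ d₂ (g.map φ) (h.map φ) := by
  ext k j
  simp only [henselJacobian, Matrix.map_apply, Matrix.of_apply, apply_ite φ, map_neg, map_zero,
    coeff_map]

end HenselJacobian

theorem henselJacobian_isUnit_iff_coprime_general {F : Type*} [Field F]
    (g h : Polynomial (Polynomial F)) (d₁ d₂ : ℕ)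
    (hg : g.Monic)
    (hd₁ : g.natDegree = d₁) (hd₂ : h.natDegree = d₂) :
    IsUnit (((henselJacobian d₁ d₂ g h).map
        (algebraMap (Polynomial F) (FractionRing (Polynomial F)))).det) ↔
      IsCoprime
        (g.map (algebraMap (Polynomial F) (FractionRing (Polynomial F))))
        (h.map (algebraMap (Polynomial F) (FractionRing (Polynomial F)))) := by
  have hinj := IsFractionRing.injective (Polynomial F) (FractionRing (Polynomial F))
  rw [henselJacobian_map]
  exact isUnit_det_henselJacobian_iff (hg.map _) (by rwa [hg.natDegree_map])
    (by rwa [natDegree_map_eq_of_injective hinj])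

/-- For a monic factorization `f = g·h` in `F[x][y]`, the Jacobian of the coefficient
equations evaluated at the coefficients of `g` and `h` is invertible over the fraction
field of `F[x]` iff `g` and `h` are coprime over that fraction field. -/
theorem henselJacobian_isUnit_iff_coprime {F : Type*} [Field F]
    (f g h : Polynomial (Polynomial F)) (d₁ d₂ : ℕ)
    (hf : f.Monic) (hg : g.Monic) (hh : h.Monic)
    (hfgh : f = g * h)
    (hd₁ : g.natDegree = d₁) (hd₂ : h.natDegree = d₂) :
    IsUnit (((henselJacobian d₁ d₂ g h).map
        (algebraMap (Polynomial F) (FractionRing (Polynomial F)))).det) ↔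
      IsCoprime
        (g.map (algebraMap (Polynomial F) (FractionRing (Polynomial F))))
        (h.map (algebraMap (Polynomial F) (FractionRing (Polynomial F)))) :=
  henselJacobian_isUnit_iff_coprime_general g h d₁ d₂ hg hd₁ hd₂
end

section
/- Let F be a field, f, f₁ ∈ F[x][y] monic in x with positive degree in x, and suppose there exist g_k, h_k, ℓ_k ∈ F[x][y] and an integer N with f ≡ g_k·h_k (mod y^N) and f₁ ≡ g_k·ℓ_k (mod y^N), where g_k is monic in x of positive degree and N > deg_y(Res_x(f, f₁)). If Res_x(f, f₁) ≠ 0, then Res_x(f, f₁) ≡ 0 (mod y^N), a contradiction; hence gcd_x(f, f₁) is nontrivial, i.e., f and f₁ share a common factor of positive degree in x. -/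
/-!
If `Res_x(f, f₁)` is read modulo `y^N`, the Bézout identity `u f + v f₁ = Res` together with
`f ≡ g_k h_k` and `f₁ ≡ g_k ℓ_k` makes the monic `g_k` of positive degree divide a constant,
so `Res ≡ 0 (mod y^N)`, and `N > deg_y Res` forces `Res = 0`. A vanishing resultant means that
`f` and `f₁` are not coprime over `F(y)`; since `F[y]` is integrally closed, Gauss's lemma turns
a common factor over `F(y)` into a monic common factor over `F[y]`.
-/

open Polynomial

/-- The Sylvester matrix of `f` and `g`, where `m` bounds the degree of `f` and
`n` bounds the degree of `g`. -/
noncomputable def sylvesterMatrix {R : Type*} [CommRing R] (m n : ℕ) (f g : R[X]) :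
    Matrix (Fin (m + n)) (Fin (m + n)) R :=
  Matrix.of fun i j =>
    if (j : ℕ) < n then
      (if (j : ℕ) ≤ (i : ℕ) then f.coeff ((i : ℕ) - (j : ℕ)) else 0)
    else
      (if (j : ℕ) - n ≤ (i : ℕ) then g.coeff ((i : ℕ) - ((j : ℕ) - n)) else 0)

/-- The resultant of `f` and `g`: the determinant of their Sylvester matrix. -/
noncomputable def resultant {R : Type*} [CommRing R] (f g : R[X]) : R :=
  (sylvesterMatrix f.natDegree g.natDegree f g).det

/-- `sylvesterMatrix` has no upper cut-off `i ≤ j + deg`, which is harmless at the exact degrees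
since higher coefficients vanish. -/
theorem sylvester_eq_reindex_sylvesterMatrix {R : Type*} [CommRing R] (f g : R[X]) :
    Polynomial.sylvester g f g.natDegree f.natDegree =
      (sylvesterMatrix f.natDegree g.natDegree f g).reindex
        (finCongr (add_comm _ _)) (finCongr (add_comm _ _)) := by
  ext i j
  induction j using Fin.addCases with
  | left j =>
    simp only [sylvester, sylvesterMatrix, Matrix.reindex_apply, Matrix.submatrix_apply,
      Matrix.of_apply, Fin.addCases_left, finCongr_symm, finCongr_apply, Fin.val_cast,
      Fin.val_castAdd, j.isLt, if_true, Set.mem_Icc]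
    split_ifs <;> try rfl
    · omega
    · exact (coeff_eq_zero_of_natDegree_lt (by omega)).symm
  | right j =>
    simp only [sylvester, sylvesterMatrix, Matrix.reindex_apply, Matrix.submatrix_apply,
      Matrix.of_apply, Fin.addCases_right, finCongr_symm, finCongr_apply, Fin.val_cast,
      Fin.val_natAdd, Set.mem_Icc, Nat.add_sub_cancel_left]
    rw [if_neg (Nat.not_lt.mpr (Nat.le_add_right _ _))]
    split_ifs <;> try rfl
    · omega
    · exact (coeff_eq_zero_of_natDegree_lt (by omega)).symm

theorem resultant_eq_resultant_swap {R : Type*} [CommRing R] (f g : R[X]) :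
    _root_.resultant f g = Polynomial.resultant g f := by
  rw [Polynomial.resultant, sylvester_eq_reindex_sylvesterMatrix, Matrix.det_reindex_self,
    _root_.resultant]

theorem Polynomial.Monic.eq_zero_of_dvd_C {R : Type*} [CommRing R] {p : R[X]} (hp : p.Monic)
    (hp0 : 0 < p.natDegree) {a : R} (h : p ∣ C a) : a = 0 := by
  by_contra ha
  exact hp.not_dvd_of_natDegree_lt (C_ne_zero.mpr ha) (by rwa [natDegree_C]) h

theorem Polynomial.resultant_mem_of_monic_common_factor_mod {R : Type*} [CommRing R] (I : Ideal R)
    {f g d h l : R[X]} (hd : d.Monic) (hd0 : 0 < d.natDegree)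
    (hfg : f.natDegree ≠ 0 ∨ g.natDegree ≠ 0)
    (hf : f - d * h ∈ I.map C) (hg : g - d * l ∈ I.map C) :
    Polynomial.resultant f g ∈ I := by
  set π := Ideal.Quotient.mk I
  have hπ : ∀ {p q : R[X]}, p - q ∈ I.map C → p.map π = q.map π := by
    intro p q hpq
    rw [← Ideal.mk_ker (I := I), ← Polynomial.ker_mapRingHom] at hpq
    simpa [sub_eq_zero] using hpq
  obtain ⟨p, q, -, -, hbez⟩ := exists_mul_add_mul_eq_C_resultant f g le_rfl le_rfl hfg
  have hdvd : d.map π ∣ C (π (Polynomial.resultant f g)) := by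
    refine ⟨h.map π * p.map π + l.map π * q.map π, ?_⟩
    rw [← Polynomial.map_C, ← hbez, Polynomial.map_add, Polynomial.map_mul, Polynomial.map_mul,
      hπ hf, hπ hg, Polynomial.map_mul, Polynomial.map_mul]
    ring
  rw [← Ideal.Quotient.eq_zero_iff_mem]
  nontriviality (R ⧸ I)
  exact (hd.map π).eq_zero_of_dvd_C (by rwa [hd.natDegree_map]) hdvd

theorem Polynomial.exists_monic_dvd_dvd_of_not_isCoprime_map {R : Type*} [CommRing R]
    [IsDomain R] [IsIntegrallyClosed R] (K : Type*) [Field K] [Algebra R K] [IsFractionRing R K]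
    {f g : R[X]} (hf : f.Monic) (hg : g.Monic)
    (hfg : ¬ IsCoprime (f.map (algebraMap R K)) (g.map (algebraMap R K))) :
    ∃ d : R[X], d.Monic ∧ 0 < d.natDegree ∧ d ∣ f ∧ d ∣ g := by
  obtain ⟨e, hef, heg, he⟩ : ∃ e : K[X], e ∣ f.map (algebraMap R K) ∧
      e ∣ g.map (algebraMap R K) ∧ ¬ IsUnit e := by
    simpa [IsRelPrime, ← isRelPrime_iff_isCoprime] using hfg
  have he0 : e ≠ 0 := ne_zero_of_dvd_ne_zero (hf.map _).ne_zero hef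
  obtain ⟨d, hde⟩ := IsIntegrallyClosed.eq_map_mul_C_of_dvd K hf hef
  have hdvd_e : d.map (algebraMap R K) ∣ e := hde ▸ dvd_mul_right _ _
  have hlc : e.leadingCoeff ≠ 0 := leadingCoeff_ne_zero.mpr he0
  have hdK : (d.map (algebraMap R K)).Monic := by
    have := congrArg leadingCoeff hde
    rw [leadingCoeff_mul, leadingCoeff_C] at this
    exact mul_right_cancel₀ hlc (this.trans (one_mul _).symm)
  have hd : d.Monic := monic_of_injective (IsFractionRing.injective R K) hdK
  refine ⟨d, hd, ?_, hf.dvd_of_fraction_map_dvd_fraction_map hd (hdvd_e.trans hef),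
    hg.dvd_of_fraction_map_dvd_fraction_map hd (hdvd_e.trans heg)⟩
  rw [← hd.natDegree_map (algebraMap R K), ← natDegree_mul_C hlc, hde, Nat.pos_iff_ne_zero]
  exact fun h0 ↦ he (isUnit_iff_degree_eq_zero.mpr (by rw [degree_eq_natDegree he0, h0]; rfl))

theorem Polynomial.exists_monic_dvd_dvd_of_resultant_eq_zero {R : Type*} [CommRing R]
    [IsDomain R] [IsIntegrallyClosed R] {f g : R[X]} (hf : f.Monic) (hg : g.Monic)
    (hfg : Polynomial.resultant f g = 0) :
    ∃ d : R[X], d.Monic ∧ 0 < d.natDegree ∧ d ∣ f ∧ d ∣ g := by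
  refine exists_monic_dvd_dvd_of_not_isCoprime_map (FractionRing R) hf hg
    (resultant_eq_zero_iff.mp ?_).2
  simp [hf.natDegree_map, hg.natDegree_map, hfg]

theorem common_factor_of_hensel_lift_general {F : Type*} [Field F]
    (f f₁ gk hk lk : Polynomial (Polynomial F)) (N : ℕ)
    (hf : f.Monic) (hfdeg : 0 < f.natDegree)
    (hf₁ : f₁.Monic)
    (hgk : gk.Monic) (hgkdeg : 0 < gk.natDegree)
    (hN : (_root_.resultant f f₁).natDegree < N)
    (hcong₁ : f - gk * hk ∈
      Ideal.span {(Polynomial.C (Polynomial.X ^ N) : Polynomial (Polynomial F))})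
    (hcong₂ : f₁ - gk * lk ∈
      Ideal.span {(Polynomial.C (Polynomial.X ^ N) : Polynomial (Polynomial F))}) :
    ∃ d : Polynomial (Polynomial F), 0 < d.natDegree ∧ d ∣ f ∧ d ∣ f₁ := by
  rw [resultant_eq_resultant_swap] at hN
  have hspan : Ideal.span {(C (X ^ N) : Polynomial (Polynomial F))} =
      (Ideal.span {X ^ N}).map C := by
    rw [Ideal.map_span, Set.image_singleton]
  rw [hspan] at hcong₁ hcong₂
  have hmem := resultant_mem_of_monic_common_factor_mod _ hgk hgkdeg (Or.inr hfdeg.ne') hcong₂ hcong₁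
  have hres : Polynomial.resultant f₁ f = 0 := by
    by_contra hne
    have := natDegree_le_of_dvd (Ideal.mem_span_singleton.mp hmem) hne
    rw [natDegree_X_pow] at this
    omega
  obtain ⟨d, -, hd, hdf₁, hdf⟩ := exists_monic_dvd_dvd_of_resultant_eq_zero hf₁ hf hres
  exact ⟨d, hd, hdf, hdf₁⟩

/-- Hensel-lifted factors recover true factors: if `f, f₁ ∈ F[y][x]` are monic in `x`
of positive degree, and a monic `g_k` of positive degree in `x` divides both `f` and
`f₁` modulo `y^N` with `N > deg_y Res_x(f, f₁)`, then `f` and `f₁` share a common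
factor of positive degree in `x`. -/
theorem common_factor_of_hensel_lift {F : Type*} [Field F]
    (f f₁ gk hk lk : Polynomial (Polynomial F)) (N : ℕ)
    (hf : f.Monic) (hfdeg : 0 < f.natDegree)
    (hf₁ : f₁.Monic) (hf₁deg : 0 < f₁.natDegree)
    (hgk : gk.Monic) (hgkdeg : 0 < gk.natDegree)
    (hN : (_root_.resultant f f₁).natDegree < N)
    (hcong₁ : f - gk * hk ∈
      Ideal.span {(Polynomial.C (Polynomial.X ^ N) : Polynomial (Polynomial F))})
    (hcong₂ : f₁ - gk * lk ∈
      Ideal.span {(Polynomial.C (Polynomial.X ^ N) : Polynomial (Polynomial F))}) :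
    ∃ d : Polynomial (Polynomial F), 0 < d.natDegree ∧ d ∣ f ∧ d ∣ f₁ :=
  common_factor_of_hensel_lift_general f f₁ gk hk lk N hf hfdeg hf₁ hgk hgkdeg hN hcong₁ hcong₂
end
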